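/- arXiv:2504.03715 — 2 statements merged into one kernel-verified Lean document; each statement's English description precedes it below -/
import Mathlib

section
/- Let X be a metric space, A a finite subset, x_i ∈ A, x_m ∉ A with d(x_i, x_m) < r, and A' = (A ∪ {x_m}) \ {x_i}. Then for every x_j ∈ P(x_i, r, A), the set of archive points within radius 2r of x_j satisfies P(x_j, 2r, A') = (P(x_j, 2r, A) ∪ {x_m}) \ {x_i}. -/
/-- The set of points of archive `A` strictly within distance `r` of `x`. -/
noncomputable def P {X : Type*} [MetricSpace X] [DecidableEq X] (x : X) (r : ℝ) (A : Finset X) : Finset X :=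
  A.filter (fun y => dist x y < r)

theorem stmt1 {X : Type*} [MetricSpace X] [DecidableEq X]
    (A : Finset X) (r : ℝ) (hr : 0 < r) (x_i x_m : X)
    (hi : x_i ∈ A) (hm : x_m ∉ A) (hd : dist x_i x_m < r)
    (A' : Finset X) (hA' : A' = (A ∪ {x_m}) \ {x_i}) :
    ∀ x_j ∈ P x_i r A,
      P x_j (2 * r) A' = (P x_j (2 * r) A ∪ {x_m}) \ {x_i} := by
  intro x_j hj
  simp only [P, Finset.mem_filter] at hj
  obtain ⟨hjA, hij⟩ := hj
  have hjm : dist x_j x_m < 2 * r := by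
    calc dist x_j x_m ≤ dist x_j x_i + dist x_i x_m := dist_triangle _ _ _
    _ < r + r := by rw [dist_comm]; linarith
    _ = 2 * r := by ring
  subst hA'
  ext y
  simp only [P, Finset.mem_filter, Finset.mem_sdiff, Finset.mem_union, Finset.mem_singleton]
  constructor
  · rintro ⟨⟨hy | hy, hyi⟩, hyd⟩
    · exact ⟨Or.inl ⟨hy, hyd⟩, hyi⟩
    · subst hy; exact ⟨Or.inr rfl, hyi⟩
  · rintro ⟨hy | hy, hyi⟩
    · exact ⟨⟨Or.inl hy.1, hyi⟩, hy.2⟩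
    · subst hy; exact ⟨⟨Or.inr rfl, hyi⟩, hjm⟩
end

section
/- Let X be a metric space and let Ξ be a function from finite subsets of X to ℝ that is strictly monotone under dominated replacement: if S is a finite set, y ∈ S, z ∉ S, and z strictly dominates y (with respect to a given strict partial order ≻ on X), then Ξ((S ∪ {z}) \ {y}) > Ξ(S). Let A be a finite subset of X, x_i ∈ A, x_m ∉ A with x_m ≻ x_i and d(x_i, x_m) < r, and set A' = (A ∪ {x_m}) \ {x_i}. Then for every x_j ∈ P(x_i, r, A), Ξ(P(x_j, 2r, A')) > Ξ(P(x_j, 2r, A)). -/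
theorem stmt2 {X : Type*} [MetricSpace X] [DecidableEq X]
    (dom : X → X → Prop) (hdom : IsStrictOrder X dom)
    (Ξ : Finset X → ℝ)
    (hΞ : ∀ (S : Finset X) (y z : X), y ∈ S → z ∉ S → dom z y →
      Ξ ((S ∪ {z}) \ {y}) > Ξ S)
    (A : Finset X) (r : ℝ) (x_i x_m : X)
    (hi : x_i ∈ A) (hm : x_m ∉ A) (hdm : dom x_m x_i) (hd : dist x_i x_m < r)
    (A' : Finset X) (hA' : A' = (A ∪ {x_m}) \ {x_i}) :
    ∀ x_j ∈ P x_i r A,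
      Ξ (P x_j (2 * r) A') > Ξ (P x_j (2 * r) A) := by
  intro x_j hj
  simp only [P, Finset.mem_filter] at hj
  obtain ⟨hjA, hji⟩ := hj
  have hmj : dist x_j x_m < 2 * r := by
    calc dist x_j x_m ≤ dist x_j x_i + dist x_i x_m := dist_triangle _ _ _
      _ < r + r := by rw [dist_comm] at hji; linarith
      _ = 2 * r := by ring
  have hij : dist x_j x_i < 2 * r := by
    have : (0:ℝ) ≤ dist x_i x_m := dist_nonneg
    rw [dist_comm] at hji; linarith
  have hiP : x_i ∈ P x_j (2 * r) A := by
    simp [P, Finset.mem_filter, hi, hij]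
  have hmP : x_m ∉ P x_j (2 * r) A := by
    simp [P, Finset.mem_filter, hm]
  have key : P x_j (2 * r) A' = (P x_j (2 * r) A ∪ {x_m}) \ {x_i} := by
    ext y
    simp only [P, hA', Finset.mem_filter, Finset.mem_sdiff, Finset.mem_union,
      Finset.mem_singleton]
    constructor
    · rintro ⟨⟨hy | hy, hyi⟩, hdy⟩
      · exact ⟨Or.inl ⟨hy, hdy⟩, hyi⟩
      · exact ⟨Or.inr hy, hyi⟩
    · rintro ⟨hy | hy, hyi⟩
      · exact ⟨⟨Or.inl hy.1, hyi⟩, hy.2⟩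
      · subst hy; exact ⟨⟨Or.inr rfl, hyi⟩, hmj⟩
  rw [key]
  exact hΞ _ _ _ hiP hmP hdm
end
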